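/- Let X be a real topological vector space and T a continuous linear operator on X. Then T is u-frequently hypercyclic if and only if -T is u-frequently hypercyclic, and their sets of u-frequently hypercyclic vectors coincide. -/

import Mathlib

/-
For even `n` we have `(-T) ^ n = T ^ n`, so it suffices that every nonempty open set `U` is
visited by the `T`-orbit of `x` at a set of even times of positive upper density. If the even
visits had density zero, the odd ones would have positive density. By Ansari's theorem the
orbit also visits `U` at some even time, so there is an odd `c` for which
`W = U ∩ (T ^ c)⁻¹' U` is nonempty; the odd visits to `W` then have positive density, and
shifted by `c` they become even visits to `U`, a contradiction.

Ansari's theorem (the even part of a dense orbit in a real Hausdorff space is dense) comes from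
splitting the space into the closures of the even and odd parts of the orbit, which `T` swaps:
the connected dense set of nonzero vectors `p(T) x` meets both, and all of its points have
dense orbits, since `p(T)` has dense range (Bourdon). The non-Hausdorff case is reduced to the
separation quotient.
-/

open Filter Topology

open scoped Classical in
noncomputable def upperDensity (A : Set ℕ) : ℝ :=
  Filter.limsup (fun n : ℕ => (((Finset.range (n + 1)).filter (fun m => m ∈ A)).card : ℝ) / n) Filter.atTop

def uFHCVector {𝕜 X : Type*} [RCLike 𝕜] [AddCommGroup X] [Module 𝕜 X] [TopologicalSpace X]
    [IsTopologicalAddGroup X] [ContinuousSMul 𝕜 X] (T : X →L[𝕜] X) (x : X) : Prop :=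
  ∀ U : Set X, IsOpen U → U.Nonempty → 0 < upperDensity {n : ℕ | (T ^ n) x ∈ U}

section UpperDensity

open scoped Classical

noncomputable def densityRatio (A : Set ℕ) (n : ℕ) : ℝ :=
  (((Finset.range (n + 1)).filter (· ∈ A)).card : ℝ) / n

theorem upperDensity_eq_limsup (A : Set ℕ) : upperDensity A = limsup (densityRatio A) atTop :=
  rfl

theorem densityRatio_nonneg (A : Set ℕ) (n : ℕ) : 0 ≤ densityRatio A n := by
  unfold densityRatio; positivity

theorem densityRatio_le_two (A : Set ℕ) (n : ℕ) : densityRatio A n ≤ 2 := by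
  unfold densityRatio
  rcases Nat.eq_zero_or_pos n with rfl | hn
  · simp
  have hcard : (((Finset.range (n + 1)).filter (· ∈ A)).card : ℝ) ≤ n + 1 := by
    exact_mod_cast (Finset.card_filter_le _ _).trans (Finset.card_range _).le
  have hn1 : (1 : ℝ) ≤ n := by exact_mod_cast hn
  rw [div_le_iff₀ (by positivity)]
  linarith

theorem isBoundedUnder_le_densityRatio (A : Set ℕ) :
    IsBoundedUnder (· ≤ ·) atTop (densityRatio A) :=
  isBoundedUnder_of ⟨2, densityRatio_le_two A⟩

theorem isBoundedUnder_ge_densityRatio (A : Set ℕ) :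
    IsBoundedUnder (· ≥ ·) atTop (densityRatio A) :=
  isBoundedUnder_of ⟨0, densityRatio_nonneg A⟩

theorem isCoboundedUnder_le_densityRatio (A : Set ℕ) :
    IsCoboundedUnder (· ≤ ·) atTop (densityRatio A) :=
  (isBoundedUnder_ge_densityRatio A).isCoboundedUnder_le

theorem upperDensity_empty : upperDensity ∅ = 0 := by
  have : densityRatio ∅ = 0 := funext fun n => by simp [densityRatio]
  rw [upperDensity_eq_limsup, this, Pi.zero_def, limsup_const]

theorem nonempty_of_upperDensity_pos {A : Set ℕ} (h : 0 < upperDensity A) : A.Nonempty :=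
  Set.nonempty_iff_ne_empty.mpr fun hA => by simp [hA, upperDensity_empty] at h

theorem upperDensity_mono {A B : Set ℕ} (h : A ⊆ B) : upperDensity A ≤ upperDensity B := by
  rw [upperDensity_eq_limsup, upperDensity_eq_limsup]
  refine limsup_le_limsup (.of_forall fun n => ?_) (isCoboundedUnder_le_densityRatio A)
    (isBoundedUnder_le_densityRatio B)
  unfold densityRatio
  gcongr

theorem upperDensity_union_le (A B : Set ℕ) :
    upperDensity (A ∪ B) ≤ upperDensity A + upperDensity B := by
  have hle : ∀ n, densityRatio (A ∪ B) n ≤ (densityRatio A + densityRatio B) n := fun n => by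
    simp only [densityRatio, Pi.add_apply, ← add_div, Set.mem_union, Finset.filter_or]
    gcongr
    exact_mod_cast Finset.card_union_le _ _
  calc upperDensity (A ∪ B) ≤ limsup (densityRatio A + densityRatio B) atTop :=
        limsup_le_limsup (.of_forall hle) (isCoboundedUnder_le_densityRatio _)
          (isBoundedUnder_le_add (isBoundedUnder_le_densityRatio A)
            (isBoundedUnder_le_densityRatio B))
    _ ≤ upperDensity A + upperDensity B :=
        limsup_add_le (isBoundedUnder_ge_densityRatio A) (isBoundedUnder_le_densityRatio A)
          (isCoboundedUnder_le_densityRatio B) (isBoundedUnder_le_densityRatio B)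

theorem upperDensity_le_of_add_mem {A B : Set ℕ} {c : ℕ} (h : ∀ n ∈ A, n + c ∈ B) :
    upperDensity A ≤ upperDensity B := by
  have hcard : ∀ n, ((Finset.range (n + 1)).filter (· ∈ A)).card ≤
      ((Finset.range (n + c + 1)).filter (· ∈ B)).card := fun n =>
    Finset.card_le_card_of_injOn (· + c)
      (fun m hm => by
        simp only [Finset.coe_filter, Finset.mem_range, Set.mem_ofPred_eq] at hm ⊢
        exact ⟨by omega, h m hm.2⟩)
      (fun _ _ _ _ => Nat.add_right_cancel)
  -- Counting `A` up to `n` is counting `B` up to `n + c`, at the cost of the ratio `(n + c) / n`.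
  have hle : ∀ n, densityRatio A n ≤ densityRatio B (n + c) + 2 * c / n := fun n => by
    rcases Nat.eq_zero_or_pos n with rfl | hn
    · simpa [densityRatio] using densityRatio_nonneg B c
    have hn' : (0 : ℝ) < n := by exact_mod_cast hn
    have hA : (((Finset.range (n + 1)).filter (· ∈ A)).card : ℝ) ≤
        densityRatio B (n + c) * (n + c) := by
      rw [densityRatio, Nat.cast_add, div_mul_cancel₀ _ (by positivity)]
      exact_mod_cast hcard n
    have h2c := mul_le_mul_of_nonneg_right (densityRatio_le_two B (n + c)) c.cast_nonneg
    rw [densityRatio, div_le_iff₀ hn', add_mul, div_mul_cancel₀ _ hn'.ne']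
    nlinarith
  set shifted := fun n => densityRatio B (n + c)
  set correction := fun n : ℕ => 2 * (c : ℝ) / n
  have hlim : Tendsto correction atTop (𝓝 0) := tendsto_const_div_atTop_nhds_zero_nat _
  have hshifted : IsBoundedUnder (· ≤ ·) atTop shifted :=
    isBoundedUnder_of ⟨2, fun n => densityRatio_le_two B _⟩
  calc upperDensity A ≤ limsup (shifted + correction) atTop :=
        limsup_le_limsup (.of_forall hle) (isCoboundedUnder_le_densityRatio A)
          (isBoundedUnder_le_add hshifted hlim.isBoundedUnder_le)
    _ ≤ limsup shifted atTop + limsup correction atTop :=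
        limsup_add_le (isBoundedUnder_of ⟨0, fun n => densityRatio_nonneg B _⟩) hshifted
          hlim.isCoboundedUnder_le hlim.isBoundedUnder_le
    _ = upperDensity B := by rw [hlim.limsup_eq, add_zero, limsup_nat_add]; rfl

end UpperDensity

section NoDenseOrbit

variable {E : Type*} [AddCommGroup E] [Module ℝ E]

theorem LinearMap.exists_norm_apply_gt {φ : E →ₗ[ℝ] ℂ} (hφ : φ ≠ 0) (r : ℝ) :
    ∃ u, r < ‖φ u‖ := by
  obtain ⟨v, hv⟩ := DFunLike.ne_iff.mp hφ
  have hv' : 0 < ‖φ v‖ := norm_pos_iff.mpr hv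
  refine ⟨((|r| + 1) / ‖φ v‖) • v, ?_⟩
  rw [map_smul, norm_smul, Real.norm_eq_abs, abs_of_pos (by positivity), div_mul_cancel₀ _ hv'.ne']
  linarith [le_abs_self r]

variable [TopologicalSpace E]

theorem not_denseRange_orbit_of_eigenfunctional (T : Module.End ℝ E) {φ : E →ₗ[ℝ] ℂ}
    (hφ : Continuous φ) (hφ0 : φ ≠ 0) {μ : ℂ} (hφT : ∀ u, φ (T u) = μ * φ u) (x : E) :
    ¬ DenseRange fun n : ℕ => (T ^ n) x := by
  intro hx
  have horbit : ∀ n : ℕ, φ ((T ^ n) x) = μ ^ n * φ x := fun n => by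
    induction n with
    | zero => simp
    | succ n ih => rw [pow_succ', Module.End.mul_apply, hφT, ih, pow_succ', mul_assoc]
  have hrange : ∀ {K : Set ℂ}, IsClosed K → (∀ n : ℕ, μ ^ n * φ x ∈ K) → ∀ u, φ u ∈ K :=
    fun hK hmem u => closure_minimal (Set.range_subset_iff.mpr fun n => by
      simpa only [Set.mem_preimage, horbit] using hmem n) (hK.preimage hφ) (hx u)
  -- Either `‖μ‖ ≤ 1` and the orbit of `φ x` is bounded, or `‖μ‖ > 1` and it stays away from
  -- `φ 0 = 0` unless `φ x = 0`; in both cases `φ` would be bounded.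
  have hbdd : ∀ u, ‖φ u‖ ≤ ‖φ x‖ := by
    rcases le_or_gt ‖μ‖ 1 with hμ | hμ
    · refine fun u => mem_closedBall_zero_iff.mp <|
        hrange Metric.isClosed_closedBall (fun n => ?_) u
      rw [mem_closedBall_zero_iff, norm_mul, norm_pow]
      exact mul_le_of_le_one_left (norm_nonneg _) (pow_le_one₀ (norm_nonneg _) hμ)
    · have h0 := hrange (K := {z | ‖φ x‖ ≤ ‖z‖}) (isClosed_le continuous_const continuous_norm)
        (fun n => by
          rw [Set.mem_ofPred_eq, norm_mul, norm_pow]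
          exact le_mul_of_one_le_left (norm_nonneg _) (one_le_pow₀ hμ.le)) 0
      have hx0 : φ x = 0 := by simpa using h0
      intro u
      have hu : φ u ∈ ({0} : Set ℂ) := hrange isClosed_singleton (fun n => by simp [hx0]) u
      simp [Set.mem_singleton_iff.mp hu, hx0]
  obtain ⟨u, hu⟩ := LinearMap.exists_norm_apply_gt hφ0 ‖φ x‖
  exact (hbdd u).not_gt hu

end NoDenseOrbit

section FiniteDimensional

variable {E : Type*} [AddCommGroup E] [Module ℝ E]

theorem Module.End.exists_eigenfunctional [FiniteDimensional ℝ E] [Nontrivial E]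
    (T : Module.End ℝ E) : ∃ (φ : E →ₗ[ℝ] ℂ) (μ : ℂ), φ ≠ 0 ∧ ∀ u, φ (T u) = μ * φ u := by
  have : Module.Finite ℂ (E →ₗ[ℝ] ℂ) := Module.Finite.linearMap ℝ ℂ E ℂ
  -- Over `ℂ`, the transpose `φ ↦ φ ∘ₗ T` has an eigenvalue even when `T` has no real one.
  obtain ⟨μ, hμ⟩ := Module.End.exists_eigenvalue (LinearMap.lcomp ℂ ℂ T)
  obtain ⟨φ, hφ⟩ := hμ.exists_hasEigenvector
  exact ⟨φ, μ, hφ.2, fun u => congr($(hφ.apply_eq_smul) u)⟩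

variable [TopologicalSpace E] [IsTopologicalAddGroup E] [ContinuousSMul ℝ E] [T2Space E]

theorem not_denseRange_orbit_of_finiteDimensional [FiniteDimensional ℝ E] [Nontrivial E]
    (T : Module.End ℝ E) (x : E) : ¬ DenseRange fun n : ℕ => (T ^ n) x := by
  obtain ⟨φ, μ, hφ0, hφT⟩ := T.exists_eigenfunctional
  exact not_denseRange_orbit_of_eigenfunctional T φ.continuous_of_finiteDimensional hφ0 hφT x

theorem not_denseRange_orbit_of_isAlgebraic [Nontrivial E] {T : Module.End ℝ E}
    (hT : IsAlgebraic ℝ T) (x : E) : ¬ DenseRange fun n : ℕ => (T ^ n) x := by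
  intro hx
  -- The orbit lies in the image of the finite-dimensional algebra `ℝ[T]`, a closed subspace.
  set W := (Subalgebra.toSubmodule (Algebra.adjoin ℝ {T})).map (LinearMap.applyₗ x)
  have : FiniteDimensional ℝ W :=
    Module.Finite.iff_fg.mpr (hT.isIntegral.fg_adjoin_singleton.map _)
  have hW : W = ⊤ := by
    refine SetLike.coe_injective <| Set.eq_univ_of_univ_subset <|
      hx.closure_range ▸ closure_minimal ?_ W.closed_of_finiteDimensional
    rintro _ ⟨n, rfl⟩
    exact ⟨T ^ n, Subalgebra.pow_mem _ (Algebra.self_mem_adjoin_singleton ℝ T) n, rfl⟩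
  have : FiniteDimensional ℝ E := Module.Finite.equiv (LinearEquiv.ofTop W hW)
  exact not_denseRange_orbit_of_finiteDimensional T x hx

end FiniteDimensional

section Bourdon

open Polynomial

variable {E : Type*} [AddCommGroup E] [Module ℝ E] [TopologicalSpace E] [IsTopologicalAddGroup E]

theorem Function.Semiconj.pow_apply {Q : Type*} [AddCommGroup Q] [Module ℝ Q]
    {π : E →ₗ[ℝ] Q} {T : E →L[ℝ] E} {S : Module.End ℝ Q} (h : Function.Semiconj π T S) (n : ℕ)
    (u : E) : (S ^ n) (π u) = π ((T ^ n) u) := by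
  rw [Module.End.pow_apply, FunLike.coe_pow_eq_iterate]
  exact (h.iterate_right n u).symm

variable [ContinuousSMul ℝ E]

theorem Function.Semiconj.aeval_apply {Q : Type*} [AddCommGroup Q] [Module ℝ Q]
    {π : E →ₗ[ℝ] Q} {T : E →L[ℝ] E} {S : Module.End ℝ Q} (h : Function.Semiconj π T S)
    (p : ℝ[X]) (u : E) : aeval S p (π u) = π (aeval T p u) := by
  simp [aeval_eq_sum_range, h.pow_apply]

theorem ContinuousLinearMap.pow_apply_aeval_apply (T : E →L[ℝ] E) (p : ℝ[X]) (n : ℕ) (x : E) :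
    (T ^ n) (aeval T p x) = aeval T p ((T ^ n) x) := by
  have h := (((commute_X p).pow_left n).map (aeval T)).eq
  simpa using congr($h x)

theorem denseRange_aeval_of_denseRange_orbit [T2Space E] {T : E →L[ℝ] E} {x : E}
    (hx : DenseRange fun n : ℕ => (T ^ n) x) {p : ℝ[X]} (hp : p ≠ 0) :
    DenseRange (aeval T p) := by
  set L := aeval T p
  set R := LinearMap.range (L : E →ₗ[ℝ] E)
  set Y := R.topologicalClosure
  change Dense (R : Set E)
  rw [Submodule.dense_iff_topologicalClosure_eq_top]
  by_contra hY
  -- `p` annihilates the operator induced by `T` on `E ⧸ Y`, which inherits a dense orbit.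
  have hTY : Y ≤ Y.comap (T : E →ₗ[ℝ] E) :=
    R.topologicalClosure_minimal
      (by
        rintro _ ⟨u, rfl⟩
        exact R.le_topologicalClosure ⟨T u, by simpa using (T.pow_apply_aeval_apply p 1 u).symm⟩)
      (R.isClosed_topologicalClosure.preimage T.continuous)
  have : IsClosed (Y : Set E) := R.isClosed_topologicalClosure
  have : Nontrivial (E ⧸ Y) := Submodule.Quotient.nontrivial_iff.mpr hY
  set S := Y.mapQ Y (T : E →ₗ[ℝ] E) hTY
  have hS : Function.Semiconj Y.mkQ T S := fun _ => rfl
  refine not_denseRange_orbit_of_isAlgebraic (T := S) ⟨p, hp, ?_⟩ (Y.mkQ x) ?_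
  · refine LinearMap.ext fun v => Submodule.Quotient.induction_on Y v fun u => ?_
    rw [← Submodule.mkQ_apply, hS.aeval_apply, LinearMap.zero_apply,
      Submodule.mkQ_apply, Submodule.Quotient.mk_eq_zero]
    exact R.le_topologicalClosure ⟨u, rfl⟩
  · simp only [hS.pow_apply]
    exact Y.mkQ_surjective.denseRange.comp hx Y.isOpenQuotientMap_mkQ.continuous

theorem denseRange_orbit_aeval_apply [T2Space E] {T : E →L[ℝ] E} {x : E}
    (hx : DenseRange fun n : ℕ => (T ^ n) x) {p : ℝ[X]} (hp : p ≠ 0) :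
    DenseRange fun n : ℕ => (T ^ n) (aeval T p x) := by
  simp only [T.pow_apply_aeval_apply]
  exact (denseRange_aeval_of_denseRange_orbit hx hp).comp hx (aeval T p).continuous

end Bourdon

section Ansari

open Polynomial

theorem Set.MapsTo.eq_univ_of_denseRange_orbit {α : Type*} [TopologicalSpace α] {f : α → α}
    {K : Set α} (hf : Set.MapsTo f K K) (hK : IsClosed K) {z : α} (hz : z ∈ K)
    (hdense : DenseRange fun n : ℕ => f^[n] z) : K = Set.univ :=
  Set.eq_univ_of_univ_subset <| hdense.closure_range ▸
    closure_minimal (Set.range_subset_iff.mpr fun n => hf.iterate n hz) hK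

variable {E : Type*} [AddCommGroup E] [Module ℝ E] [TopologicalSpace E]
  [IsTopologicalAddGroup E] [ContinuousSMul ℝ E]

theorem Submodule.isPreconnected_diff_zero {V : Submodule ℝ E} (hV : ¬ FiniteDimensional ℝ V) :
    IsPreconnected ((V : Set E) \ {0}) := by
  have hrank : 1 < Module.rank ℝ V :=
    Cardinal.one_lt_aleph0.trans_le (not_lt.mp (Module.rank_lt_aleph0_iff.not.mpr hV))
  have himage : ((↑) : V → E) '' {0}ᶜ = (V : Set E) \ {0} := by
    ext z; simp [and_comm]
  exact himage ▸ ((isPathConnected_compl_singleton_of_one_lt_rank hrank 0).image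
    continuous_subtype_val).isConnected.isPreconnected

def ContinuousLinearMap.cyclicSubspace (T : E →L[ℝ] E) (x : E) : Submodule ℝ E where
  carrier := {z | ∃ p : ℝ[X], aeval T p x = z}
  add_mem' := by rintro _ _ ⟨p, rfl⟩ ⟨q, rfl⟩; exact ⟨p + q, by simp⟩
  zero_mem' := ⟨0, by simp⟩
  smul_mem' := by rintro c _ ⟨p, rfl⟩; exact ⟨c • p, by simp⟩

theorem ContinuousLinearMap.pow_apply_mem_cyclicSubspace (T : E →L[ℝ] E) (x : E) (n : ℕ) :
    (T ^ n) x ∈ T.cyclicSubspace x :=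
  ⟨X ^ n, by simp⟩

variable [T2Space E]

theorem denseRange_orbit_of_mem_cyclicSubspace {T : E →L[ℝ] E} {x : E}
    (hx : DenseRange fun n : ℕ => (T ^ n) x) {z : E} (hz : z ∈ T.cyclicSubspace x) (hz0 : z ≠ 0) :
    DenseRange fun n : ℕ => (T ^ n) z := by
  obtain ⟨p, rfl⟩ := hz
  exact denseRange_orbit_aeval_apply hx (by rintro rfl; simp at hz0)

theorem not_finiteDimensional_cyclicSubspace [Nontrivial E] {T : E →L[ℝ] E} {x : E}
    (hx : DenseRange fun n : ℕ => (T ^ n) x) : ¬ FiniteDimensional ℝ (T.cyclicSubspace x) := by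
  intro hfin
  have hV : T.cyclicSubspace x = ⊤ := SetLike.coe_injective <| Set.eq_univ_of_univ_subset <|
    hx.closure_range ▸ closure_minimal (Set.range_subset_iff.mpr (T.pow_apply_mem_cyclicSubspace x))
      (Submodule.closed_of_finiteDimensional _)
  have : FiniteDimensional ℝ E := Module.Finite.equiv (LinearEquiv.ofTop _ hV)
  refine not_denseRange_orbit_of_finiteDimensional (T : Module.End ℝ E) x ?_
  simpa only [← ContinuousLinearMap.toLinearMap_pow, ContinuousLinearMap.coe_coe] using hx

theorem denseRange_orbit_two_mul {T : E →L[ℝ] E} {x : E}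
    (hx : DenseRange fun n : ℕ => (T ^ n) x) : DenseRange fun n : ℕ => (T ^ (2 * n)) x := by
  rcases subsingleton_or_nontrivial E with hE | hE
  · exact fun y => subset_closure ⟨0, Subsingleton.elim _ _⟩
  have hsucc : ∀ n, T ((T ^ n) x) = (T ^ (n + 1)) x := fun n => by
    rw [pow_succ']; rfl
  set Ev := closure (Set.range fun n : ℕ => (T ^ (2 * n)) x)
  set Od := closure (Set.range fun n : ℕ => (T ^ (2 * n + 1)) x)
  have hEvOd : Ev ∪ Od = Set.univ := by
    rw [← closure_union, ← Set.univ_subset_iff, ← hx.closure_range]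
    refine closure_mono (Set.range_subset_iff.mpr fun n => ?_)
    obtain ⟨k, rfl | rfl⟩ := Nat.even_or_odd' n
    exacts [.inl ⟨k, rfl⟩, .inr ⟨k, rfl⟩]
  have hTEv : Set.MapsTo T Ev Od :=
    Set.MapsTo.closure (by rintro _ ⟨n, rfl⟩; exact ⟨n, (hsucc _).symm⟩) T.continuous
  have hTOd : Set.MapsTo T Od Ev :=
    Set.MapsTo.closure (by rintro _ ⟨n, rfl⟩; exact ⟨n + 1, (hsucc _).symm⟩) T.continuous
  by_contra hEv
  replace hEv : Ev ≠ Set.univ := fun h => hEv (dense_iff_closure_eq.mpr h)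
  have hOd : Od ≠ Set.univ := by
    refine fun hOd => hEv (Set.eq_univ_of_univ_subset (hx.closure_range ▸
      closure_minimal (Set.range_subset_iff.mpr fun n => ?_) isClosed_closure))
    cases n with
    | zero => exact subset_closure ⟨0, rfl⟩
    | succ n => exact hsucc n ▸ hTOd (hOd ▸ Set.mem_univ _)
  -- `D` is connected and dense, and meets both `Ev` and `Od` since neither is everything.
  set V := T.cyclicSubspace x
  set D := (V : Set E) \ {0}
  have hD : IsPreconnected D :=
    Submodule.isPreconnected_diff_zero (not_finiteDimensional_cyclicSubspace hx)
  have hDdense : Dense D := by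
    have := Module.punctured_nhds_neBot ℝ E 0
    exact (hx.mono (Set.range_subset_iff.mpr (T.pow_apply_mem_cyclicSubspace x))).sdiff_singleton 0
  have hmeet : ∀ {A B : Set E}, IsClosed B → A ∪ B = Set.univ → B ≠ Set.univ →
      (D ∩ A).Nonempty := by
    intro A B hB hAB hB'
    obtain ⟨z, hzB, hzD⟩ :=
      hDdense.inter_open_nonempty Bᶜ hB.isOpen_compl (Set.nonempty_compl.mpr hB')
    have hz : z ∈ A ∪ B := hAB ▸ Set.mem_univ z
    exact ⟨z, hzD, hz.resolve_right hzB⟩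
  obtain ⟨z, ⟨hzV, hz0⟩, hzEv, hzOd⟩ := isPreconnected_closed_iff.mp hD Ev Od isClosed_closure
    isClosed_closure (hEvOd ▸ Set.subset_univ D) (hmeet isClosed_closure hEvOd hOd)
    (hmeet isClosed_closure (Set.union_comm _ _ ▸ hEvOd) hEv)
  have hinv : Set.MapsTo T (Ev ∩ Od) (Ev ∩ Od) := fun y hy => ⟨hTOd hy.2, hTEv hy.1⟩
  have hz := denseRange_orbit_of_mem_cyclicSubspace hx hzV hz0
  simp only [FunLike.coe_pow_eq_iterate] at hz
  have hK := hinv.eq_univ_of_denseRange_orbit (isClosed_closure.inter isClosed_closure)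
    ⟨hzEv, hzOd⟩ hz
  exact hEv (Set.univ_subset_iff.mp (hK ▸ Set.inter_subset_left))

end Ansari

section Frequent

variable {E : Type*} [AddCommGroup E] [Module ℝ E] [TopologicalSpace E]
  [IsTopologicalAddGroup E] [ContinuousSMul ℝ E]

theorem uFHCVector.denseRange_orbit {T : E →L[ℝ] E} {x : E} (hx : uFHCVector T x) :
    DenseRange fun n : ℕ => (T ^ n) x :=
  dense_iff_inter_open.mpr fun U hU hne =>
    let ⟨n, hn⟩ := nonempty_of_upperDensity_pos (hx U hU hne)
    ⟨_, hn, n, rfl⟩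

theorem uFHCVector.upperDensity_even_pos [T2Space E] {T : E →L[ℝ] E} {x : E}
    (hx : uFHCVector T x) {U : Set E} (hU : IsOpen U) (hne : U.Nonempty) :
    0 < upperDensity {n | Even n ∧ (T ^ n) x ∈ U} := by
  by_contra! h0
  have hodd : ∀ W ⊆ U, IsOpen W → W.Nonempty → 0 < upperDensity {n | Odd n ∧ (T ^ n) x ∈ W} := by
    intro W hWU hW hWne
    have hsplit : {n | (T ^ n) x ∈ W} ⊆
        {n | Even n ∧ (T ^ n) x ∈ U} ∪ {n | Odd n ∧ (T ^ n) x ∈ W} := fun n hn =>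
      (Nat.even_or_odd n).imp (⟨·, hWU hn⟩) (⟨·, hn⟩)
    linarith [hx W hW hWne, (upperDensity_mono hsplit).trans (upperDensity_union_le _ _)]
  obtain ⟨b, hb, hbU⟩ := nonempty_of_upperDensity_pos (hodd U subset_rfl hU hne)
  obtain ⟨m, hmU⟩ := (denseRange_orbit_two_mul hx.denseRange_orbit).exists_mem_open hU hne
  -- The gap between the even visit `2 * m` and the odd visit `b` is odd.
  obtain ⟨s, c, hc, hs, hsc⟩ : ∃ s c, Odd c ∧ (T ^ s) x ∈ U ∧ (T ^ (s + c)) x ∈ U := by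
    rw [Nat.odd_iff] at hb
    rcases le_total (2 * m) b with h | h
    · exact ⟨2 * m, b - 2 * m, Nat.odd_iff.mpr (by omega), hmU, by rwa [Nat.add_sub_cancel' h]⟩
    · exact ⟨b, 2 * m - b, Nat.odd_iff.mpr (by omega), hbU, by rwa [Nat.add_sub_cancel' h]⟩
  have hpow : ∀ n, (T ^ c) ((T ^ n) x) = (T ^ (n + c)) x := fun n => by
    rw [add_comm, pow_add, mul_apply_eq_comp]
  set W := U ∩ (T ^ c) ⁻¹' U
  have hW : IsOpen W := hU.inter (hU.preimage (T ^ c).continuous)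
  have hWne : W.Nonempty := ⟨(T ^ s) x, hs, by rwa [Set.mem_preimage, hpow]⟩
  have hshift : upperDensity {n | Odd n ∧ (T ^ n) x ∈ W} ≤
      upperDensity {n | Even n ∧ (T ^ n) x ∈ U} :=
    upperDensity_le_of_add_mem fun n ⟨hn, hnW⟩ => ⟨hn.add_odd hc, hpow n ▸ hnW.2⟩
  linarith [hodd W Set.inter_subset_left hW hWne]

theorem uFHCVector.neg_of_t2Space [T2Space E] {T : E →L[ℝ] E} {x : E} (hx : uFHCVector T x) :
    uFHCVector (-T) x := fun U hU hne =>
  (hx.upperDensity_even_pos hU hne).trans_le <| upperDensity_mono fun n ⟨hn, hnU⟩ => by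
    rwa [Set.mem_ofPred_eq, hn.neg_pow]

end Frequent

theorem uFHCVector_iff_of_semiconj {𝕜 E F : Type*} [RCLike 𝕜] [AddCommGroup E] [Module 𝕜 E]
    [TopologicalSpace E] [IsTopologicalAddGroup E] [ContinuousSMul 𝕜 E] [AddCommGroup F]
    [Module 𝕜 F] [TopologicalSpace F] [IsTopologicalAddGroup F] [ContinuousSMul 𝕜 F]
    {π : E → F} (hπ : IsInducing π) (hsurj : Function.Surjective π) {T : E →L[𝕜] E}
    {S : F →L[𝕜] F} (h : Function.Semiconj π T S) (x : E) :
    uFHCVector T x ↔ uFHCVector S (π x) := by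
  have hpow : ∀ n, (S ^ n) (π x) = π ((T ^ n) x) := fun n => by
    simp only [FunLike.coe_pow_eq_iterate]
    exact (h.iterate_right n x).symm
  constructor
  · intro hT V hV hne
    simpa only [Set.mem_preimage, hpow] using
      hT (π ⁻¹' V) (hV.preimage hπ.continuous) (hne.preimage hsurj)
  · intro hS U hU hne
    obtain ⟨V, hV, rfl⟩ := hπ.isOpen_iff.mp hU
    simpa only [Set.mem_preimage, hpow] using
      hS V hV ((hne.image π).mono (Set.image_preimage_subset π V))

theorem uFHCVector.neg {E : Type*} [AddCommGroup E] [Module ℝ E] [TopologicalSpace E]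
    [IsTopologicalAddGroup E] [ContinuousSMul ℝ E] {T : E →L[ℝ] E} {x : E}
    (hx : uFHCVector T x) : uFHCVector (-T) x := by
  open SeparationQuotient in
  let S := liftCLM ((mkCLM ℝ E).comp T) fun _ _ h => mk_eq_mk.mpr (h.map T.continuous)
  have hS : Function.Semiconj mk T S := fun u => (liftCLM_mk ((mkCLM ℝ E).comp T) _ u).symm
  have hnegS : Function.Semiconj mk ⇑(-T) ⇑(-S) := fun u => by simp [hS u]
  rw [uFHCVector_iff_of_semiconj isInducing_mk surjective_mk hS] at hx
  rw [uFHCVector_iff_of_semiconj isInducing_mk surjective_mk hnegS]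
  exact hx.neg_of_t2Space

theorem uFHC_neg_iff {X : Type*} [AddCommGroup X] [Module ℝ X] [TopologicalSpace X]
    [IsTopologicalAddGroup X] [ContinuousSMul ℝ X] (T : X →L[ℝ] X) :
    ((∃ x : X, uFHCVector T x) ↔ (∃ x : X, uFHCVector (-T) x)) ∧
      (∀ x : X, uFHCVector T x ↔ uFHCVector (-T) x) := by
  have h : ∀ x : X, uFHCVector T x ↔ uFHCVector (-T) x :=
    fun _ => ⟨uFHCVector.neg, fun hx => neg_neg T ▸ hx.neg⟩
  exact ⟨exists_congr h, h⟩
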